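/- Let L be a finite-dimensional complex Lie algebra with a nondegenerate symmetric ℂ-bilinear form B, let g be a real slice of (L,B), and let σ : L → L be the conjugation of L with respect to g, i.e. the ℝ-linear involution determined by σ(x) = x for all x ∈ g and σ(i • v) = −i • σ(v) for all v ∈ L. Suppose u is a compact real form of (L,B). Then there exists a ℂ-linear Lie algebra automorphism φ of L satisfying B(φ(x), φ(y)) = B(x,y) for all x,y ∈ L, such that σ(φ(u)) ⊆ φ(u). -/

import Mathlib

/-!
Setup: a finite-dimensional complex Lie algebra `L` with a nondegenerate symmetric
`ℂ`-bilinear form `B` (a "holomorphic inner product"), viewed also as a real Lie algebra.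
-/

variable {L : Type*} [LieRing L] [LieAlgebra ℂ L]

/-- A complex Lie algebra is in particular a real Lie algebra. -/
noncomputable instance instLieAlgebraRealOfComplex : LieAlgebra ℝ L :=
  { (inferInstance : Module ℝ L) with
    lie_smul := fun t x y => by
      rw [show t • y = (t : ℂ) • y from rfl, lie_smul,
        show (t : ℂ) • ⁅x, y⁆ = t • ⁅x, y⁆ from rfl] }

/-- `g` is a real form of the complex Lie algebra `L`:
`g ∩ i • g = {0}` and `g + i • g = L`. -/
def IsRealForm (g : LieSubalgebra ℝ L) : Prop :=
  (∀ x ∈ g, ∀ y ∈ g, x = Complex.I • y → x = 0) ∧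
  (∀ z : L, ∃ x ∈ g, ∃ y ∈ g, z = x + Complex.I • y)

/-- `g` is a real slice of `(L, B)`: a real form of `L` on which `B` is real-valued. -/
def IsRealSlice (B : LinearMap.BilinForm ℂ L) (g : LieSubalgebra ℝ L) : Prop :=
  IsRealForm g ∧ ∀ x ∈ g, ∀ y ∈ g, (B x y).im = 0

/-- A compact real form of `(L, B)`: a real slice on which `B` is positive definite. -/
def IsCompactRealForm (B : LinearMap.BilinForm ℂ L) (u : LieSubalgebra ℝ L) : Prop :=
  IsRealSlice B u ∧ ∀ x ∈ u, x ≠ 0 → 0 < (B x x).re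

/-- A Cartan involution of the metric `B|g`: an `ℝ`-linear involution `θ` of `g` such that
`(x, y) ↦ B x (θ y)` is a positive-definite (real-valued, symmetric) inner product on `g`. -/
def IsCartanInvolutionOfMetric (B : LinearMap.BilinForm ℂ L) (g : LieSubalgebra ℝ L)
    (θ : ↥g →ₗ[ℝ] ↥g) : Prop :=
  (∀ x, θ (θ x) = x) ∧
  (∀ x y : ↥g, B (θ x : L) (y : L) = B (x : L) (θ y : L)) ∧
  (∀ x : ↥g, x ≠ 0 → 0 < (B (x : L) (θ x : L)).re)

/-- A Cartan involution of Lie algebras of the metric `B|g`: a Cartan involution of the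
metric which is moreover a Lie algebra automorphism of `g`. -/
def IsCartanInvolutionOfLieAlgebras (B : LinearMap.BilinForm ℂ L) (g : LieSubalgebra ℝ L)
    (θ : ↥g →ₗ[ℝ] ↥g) : Prop :=
  IsCartanInvolutionOfMetric B g θ ∧ ∀ x y : ↥g, θ ⁅x, y⁆ = ⁅θ x, θ y⁆

/-!
Let `τ` be the conjugation of `L` with respect to `u`. Then `⟪x, y⟫ = B (τ x) y` is a Hermitian
inner product on `L`, for which `Λ = σ ∘ τ` is ℂ-linear, symmetric and invertible; hence
`ρ = Λ²` is diagonalisable with positive eigenvalues. Since `ρ` preserves `B` and the bracket and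
`σ ρ σ = τ ρ τ = ρ⁻¹`, every real power `ρ ^ s` preserves `B` and the bracket and satisfies
`σ ρ ^ s = ρ ^ (-s) σ`, `τ ρ ^ s = ρ ^ (-s) τ`. For `φ = ρ ^ (1/4)` and `z ∈ u` the element
`ρ ^ (-1/2) (σ z)` is fixed by `τ`, so lies in `u`, and `φ` maps it to `σ (φ z)`.
-/

open Module

theorem LinearMap.IsSymmetric.exists_basis_sq_apply_eq_pos_smul {𝕜 E : Type*} [RCLike 𝕜]
    [NormedAddCommGroup E] [InnerProductSpace 𝕜 E] [FiniteDimensional 𝕜 E] {S : E →ₗ[𝕜] E}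
    (hS : S.IsSymmetric) (hinj : Function.Injective S) :
    ∃ (b : Basis (Fin (finrank 𝕜 E)) 𝕜 E) (μ : Fin (finrank 𝕜 E) → ℝ),
      (∀ i, 0 < μ i) ∧ ∀ i, S (S (b i)) = (μ i : 𝕜) • b i := by
  have hT : (S ∘ₗ S).IsSymmetric := fun x y => by
    rw [LinearMap.comp_apply, LinearMap.comp_apply, hS, hS]
  refine ⟨(hT.eigenvectorBasis rfl).toBasis, hT.eigenvalues rfl, fun i => ?_,
    fun i => by rw [OrthonormalBasis.coe_toBasis]; exact hT.apply_eigenvectorBasis rfl i⟩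
  set v := hT.eigenvectorBasis rfl i
  have hv : ‖v‖ = 1 := (hT.eigenvectorBasis rfl).orthonormal.1 i
  have hSv : S v ≠ 0 := fun h => by simp [hinj (h.trans (map_zero S).symm)] at hv
  have h := inner_product_apply_eigenvector (hT.apply_eigenvectorBasis rfl i)
  rw [LinearMap.comp_apply, ← hS, inner_self_eq_norm_sq_to_K, hv] at h
  have h' : ((‖S v‖ ^ 2 : ℝ) : 𝕜) = (hT.eigenvalues rfl i : 𝕜) := by simpa using h
  have : ‖S v‖ ^ 2 = hT.eigenvalues rfl i := RCLike.ofReal_injective h'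
  rw [← this]
  exact pow_pos (norm_pos_iff.mpr hSv) 2

def LinearMap.toConjLinear {E F : Type*} [AddCommGroup E] [Module ℂ E] [AddCommGroup F]
    [Module ℂ F] (f : E →ₗ[ℝ] F) (hf : ∀ v, f (Complex.I • v) = -(Complex.I • f v)) :
    E →ₗ⋆[ℂ] F where
  toFun := f
  map_add' := f.map_add
  map_smul' z v := by
    rw [← Complex.re_add_im z]
    simp only [add_smul, mul_smul, Complex.coe_smul, map_add, map_smul, hf, map_mul,
      Complex.conj_ofReal, Complex.conj_I, mul_neg, neg_smul, smul_neg]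

namespace Module.Basis

section AddCommGroup

variable {E : Type*} [AddCommGroup E] [Module ℂ E] {ι : Type*}
  (b : Basis ι ℂ E) (μ : ι → ℝ)

/-- For positive `μ` this is the real power `ρ ^ s` of the operator `ρ = b.diagRpow μ 1`,
which is diagonal in `b` with eigenvalues `μ`. -/
noncomputable def diagRpow (s : ℝ) : E →ₗ[ℂ] E :=
  b.constr ℂ fun i => ((μ i ^ s : ℝ) : ℂ) • b i

theorem diagRpow_apply_self (s : ℝ) (i : ι) : b.diagRpow μ s (b i) = ((μ i ^ s : ℝ) : ℂ) • b i :=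
  b.constr_basis ℂ _ i

theorem repr_diagRpow (s : ℝ) (v : E) (i : ι) :
    b.repr (b.diagRpow μ s v) i = (μ i ^ s : ℝ) * b.repr v i := by
  suffices b.coord i ∘ₗ b.diagRpow μ s = ((μ i ^ s : ℝ) : ℂ) • b.coord i from
    LinearMap.congr_fun this v
  refine b.ext fun j => ?_
  rcases eq_or_ne j i with rfl | h
  · simp [diagRpow_apply_self, -Complex.coe_smul]
  · simp [diagRpow_apply_self, -Complex.coe_smul, h]

theorem diagRpow_zero : b.diagRpow μ 0 = LinearMap.id :=
  b.ext fun i => by simp [diagRpow_apply_self]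

variable {μ}

theorem diagRpow_add (hμ : ∀ i, 0 < μ i) (s t : ℝ) :
    b.diagRpow μ (s + t) = b.diagRpow μ s ∘ₗ b.diagRpow μ t :=
  b.ext fun i => by
    simp only [diagRpow_apply_self, LinearMap.comp_apply, map_smul, smul_smul,
      Real.rpow_add (hμ i), Complex.ofReal_mul, mul_comm]

theorem diagRpow_apply_of_eigen {m : ℝ} {v : E} (hv : b.diagRpow μ 1 v = (m : ℂ) • v) (s : ℝ) :
    b.diagRpow μ s v = ((m ^ s : ℝ) : ℂ) • v := by
  refine b.ext_elem fun i => ?_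
  have hi := congrArg (fun x => b.repr x i) hv
  simp only [repr_diagRpow, Real.rpow_one, map_smul, Finsupp.smul_apply, smul_eq_mul] at hi ⊢
  rcases eq_or_ne (b.repr v i) 0 with h | h
  · simp [h]
  · rw [Complex.ofReal_inj.mp (mul_right_cancel₀ h hi)]

theorem apply_diagRpow_eq_diagRpow_neg_apply (hμ : ∀ i, 0 < μ i) (A : E →ₗ⋆[ℂ] E)
    (hA : ∀ v, b.diagRpow μ 1 (A (b.diagRpow μ 1 v)) = A v) (s : ℝ) (v : E) :
    A (b.diagRpow μ s v) = b.diagRpow μ (-s) (A v) := by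
  have hAb (i : ι) : b.diagRpow μ 1 (A (b i)) = (((μ i)⁻¹ : ℝ) : ℂ) • A (b i) := by
    have h := hA (b i)
    rw [diagRpow_apply_self, Real.rpow_one, map_smulₛₗ, Complex.conj_ofReal, map_smul] at h
    rw [Complex.ofReal_inv, eq_inv_smul_iff₀ (Complex.ofReal_ne_zero.mpr (hμ i).ne'), h]
  refine LinearMap.congr_fun (b.ext (f₁ := A.comp (b.diagRpow μ s))
    (f₂ := (b.diagRpow μ (-s)).comp A) fun i => ?_) v
  rw [LinearMap.comp_apply, LinearMap.comp_apply, diagRpow_apply_self, map_smulₛₗ,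
    Complex.conj_ofReal, b.diagRpow_apply_of_eigen (hAb i), Real.inv_rpow (hμ i).le,
    Real.rpow_neg (hμ i).le, inv_inv]

theorem diagRpow_bilin (hμ : ∀ i, 0 < μ i) (B : LinearMap.BilinForm ℂ E)
    (hB : ∀ x y, B (b.diagRpow μ 1 x) (b.diagRpow μ 1 y) = B x y) (s : ℝ) (x y : E) :
    B (b.diagRpow μ s x) (b.diagRpow μ s y) = B x y := by
  suffices B.compl₁₂ (b.diagRpow μ s) (b.diagRpow μ s) = B from LinearMap.congr_fun₂ this x y
  refine LinearMap.ext_basis b b fun i j => ?_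
  have h := hB (b i) (b j)
  simp only [diagRpow_apply_self, Real.rpow_one, map_smul, LinearMap.smul_apply, smul_eq_mul]
    at h
  simp only [LinearMap.compl₁₂_apply, diagRpow_apply_self, map_smul, LinearMap.smul_apply,
    smul_eq_mul]
  rcases eq_or_ne (B (b i) (b j)) 0 with h0 | h0
  · simp [h0]
  · have hμμ : μ j * μ i = 1 := by
      have h' : (((μ j * μ i : ℝ) : ℂ) - 1) * B (b i) (b j) = 0 := by
        push_cast; linear_combination h
      exact_mod_cast sub_eq_zero.mp ((mul_eq_zero.mp h').resolve_right h0)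
    rw [← mul_assoc, ← Complex.ofReal_mul, ← Real.mul_rpow (hμ j).le (hμ i).le, hμμ,
      Real.one_rpow, Complex.ofReal_one, one_mul]

end AddCommGroup

section LieAlgebra

variable {E : Type*} [LieRing E] [LieAlgebra ℂ E] {ι : Type*}
  (b : Basis ι ℂ E) {μ : ι → ℝ}

theorem diagRpow_lie (hμ : ∀ i, 0 < μ i)
    (h1 : ∀ x y : E, b.diagRpow μ 1 ⁅x, y⁆ = ⁅b.diagRpow μ 1 x, b.diagRpow μ 1 y⁆)
    (s : ℝ) (x y : E) :
    b.diagRpow μ s ⁅x, y⁆ = ⁅b.diagRpow μ s x, b.diagRpow μ s y⁆ := by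
  let β : E →ₗ[ℂ] E →ₗ[ℂ] E := LieModule.toEnd ℂ E E
  suffices β.compr₂ (b.diagRpow μ s) = β.compl₁₂ (b.diagRpow μ s) (b.diagRpow μ s) from
    LinearMap.congr_fun₂ this x y
  refine LinearMap.ext_basis b b fun i j => ?_
  have hij : b.diagRpow μ 1 ⁅b i, b j⁆ = ((μ i * μ j : ℝ) : ℂ) • ⁅b i, b j⁆ := by
    rw [h1, diagRpow_apply_self, diagRpow_apply_self, smul_lie, lie_smul, smul_smul,
      Real.rpow_one, Real.rpow_one, Complex.ofReal_mul]
  simp only [β, LinearMap.compr₂_apply, LinearMap.compl₁₂_apply, LieHom.coe_toLinearMap,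
    LieModule.toEnd_apply_apply, b.diagRpow_apply_of_eigen hij, diagRpow_apply_self, smul_lie,
    lie_smul, smul_smul, Real.mul_rpow (hμ i).le (hμ j).le, Complex.ofReal_mul]
  rw [mul_comm]

noncomputable def diagRpowLieEquiv (hμ : ∀ i, 0 < μ i)
    (h1 : ∀ x y : E, b.diagRpow μ 1 ⁅x, y⁆ = ⁅b.diagRpow μ 1 x, b.diagRpow μ 1 y⁆) (s : ℝ) :
    E ≃ₗ⁅ℂ⁆ E :=
  { b.diagRpow μ s with
    map_lie' := b.diagRpow_lie hμ h1 s _ _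
    invFun := b.diagRpow μ (-s)
    left_inv v := by
      change (b.diagRpow μ (-s) ∘ₗ b.diagRpow μ s) v = v
      rw [← b.diagRpow_add hμ, neg_add_cancel, diagRpow_zero, LinearMap.id_apply]
    right_inv v := by
      change (b.diagRpow μ s ∘ₗ b.diagRpow μ (-s)) v = v
      rw [← b.diagRpow_add hμ, add_neg_cancel, diagRpow_zero, LinearMap.id_apply] }

end LieAlgebra

end Module.Basis

section Conjugation

variable {w : LieSubalgebra ℝ L} {c : L →ₗ⋆[ℂ] L}

theorem lie_add_I_smul_add_I_smul (x y x' y' : L) :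
    ⁅x + Complex.I • y, x' + Complex.I • y'⁆ =
      (⁅x, x'⁆ - ⁅y, y'⁆) + Complex.I • (⁅x, y'⁆ + ⁅y, x'⁆) := by
  simp only [add_lie, lie_add, smul_lie, lie_smul, smul_add, smul_smul, Complex.I_mul_I,
    neg_one_smul]
  abel

theorem LinearMap.BilinForm.apply_add_I_smul_add_I_smul (B : LinearMap.BilinForm ℂ L)
    (x y x' y' : L) :
    B (x + Complex.I • y) (x' + Complex.I • y') =
      (B x x' - B y y') + Complex.I * (B x y' + B y x') := by
  simp only [map_add, map_smul, LinearMap.add_apply, LinearMap.smul_apply, smul_eq_mul]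
  linear_combination B y y' * Complex.I_sq

-- Written with `-y` so that the expansions `*_add_I_smul_add_I_smul` apply to both sides.
theorem conj_add_I_smul (hc : ∀ x ∈ w, c x = x) {x y : L} (hx : x ∈ w) (hy : y ∈ w) :
    c (x + Complex.I • y) = x + Complex.I • -y := by
  rw [map_add, map_smulₛₗ, hc x hx, hc y hy, Complex.conj_I, neg_smul, smul_neg]

namespace IsRealForm

theorem exists_conj (hw : IsRealForm w) : ∃ c : L →ₗ⋆[ℂ] L, ∀ x ∈ w, c x = x := by
  let p := w.toSubmodule
  let q := p.map ((LinearMap.lsmul ℂ L Complex.I).restrictScalars ℝ)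
  have hpq : IsCompl p q := by
    constructor
    · rw [Submodule.disjoint_def]
      rintro z hz ⟨y, hy, rfl⟩
      exact hw.1 _ hz y hy rfl
    · rw [codisjoint_iff, eq_top_iff]
      rintro z -
      obtain ⟨x, hx, y, hy, rfl⟩ := hw.2 z
      exact Submodule.add_mem_sup hx ⟨y, hy, rfl⟩
  let c := LinearMap.ofIsCompl hpq p.subtype (-q.subtype)
  have hcw : ∀ x ∈ w, c x = x := fun x hx => LinearMap.ofIsCompl_apply_left hpq ⟨x, hx⟩
  have hcI : ∀ y ∈ w, c (Complex.I • y) = -(Complex.I • y) := fun y hy =>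
    LinearMap.ofIsCompl_apply_right hpq ⟨Complex.I • y, y, hy, rfl⟩
  refine ⟨c.toConjLinear fun v => ?_, hcw⟩
  obtain ⟨x, hx, y, hy, rfl⟩ := hw.2 v
  have hIv : Complex.I • (x + Complex.I • y) = -y + Complex.I • x := by
    rw [smul_add, smul_smul, Complex.I_mul_I, neg_one_smul, add_comm]
  rw [hIv, map_add, map_add, map_neg, hcw y hy, hcI x hx, hcw x hx, hcI y hy, smul_add,
    smul_neg, smul_smul, Complex.I_mul_I, neg_one_smul]
  abel

theorem conj_conj (hw : IsRealForm w) (hc : ∀ x ∈ w, c x = x) (z : L) : c (c z) = z := by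
  obtain ⟨x, hx, y, hy, rfl⟩ := hw.2 z
  rw [conj_add_I_smul hc hx hy, conj_add_I_smul hc hx (neg_mem hy), neg_neg]

theorem mem_of_conj_eq (hw : IsRealForm w) (hc : ∀ x ∈ w, c x = x) {z : L} (h : c z = z) :
    z ∈ w := by
  obtain ⟨x, hx, y, hy, rfl⟩ := hw.2 z
  rw [conj_add_I_smul hc hx hy, add_right_inj, smul_neg, neg_eq_iff_add_eq_zero, ← two_smul ℂ,
    smul_smul, smul_eq_zero] at h
  rw [h.resolve_left (by norm_num [Complex.I_ne_zero]), smul_zero, add_zero]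
  exact hx

theorem conj_lie (hw : IsRealForm w) (hc : ∀ x ∈ w, c x = x) (a b : L) :
    c ⁅a, b⁆ = ⁅c a, c b⁆ := by
  obtain ⟨x, hx, y, hy, rfl⟩ := hw.2 a
  obtain ⟨x', hx', y', hy', rfl⟩ := hw.2 b
  rw [lie_add_I_smul_add_I_smul, conj_add_I_smul hc hx hy, conj_add_I_smul hc hx' hy',
    lie_add_I_smul_add_I_smul,
    conj_add_I_smul hc (sub_mem (w.lie_mem hx hx') (w.lie_mem hy hy'))
      (add_mem (w.lie_mem hx hy') (w.lie_mem hy hx'))]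
  simp only [lie_neg, neg_lie, neg_neg, neg_add]

end IsRealForm

namespace IsRealSlice

variable {B : LinearMap.BilinForm ℂ L}

theorem bilin_conj_conj (hw : IsRealSlice B w) (hc : ∀ x ∈ w, c x = x) (a b : L) :
    B (c a) (c b) = starRingEnd ℂ (B a b) := by
  obtain ⟨x, hx, y, hy, rfl⟩ := hw.1.2 a
  obtain ⟨x', hx', y', hy', rfl⟩ := hw.1.2 b
  rw [conj_add_I_smul hc hx hy, conj_add_I_smul hc hx' hy', B.apply_add_I_smul_add_I_smul,
    B.apply_add_I_smul_add_I_smul]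
  apply Complex.ext <;>
    simp [hw.2 x hx x' hx', hw.2 y hy y' hy', hw.2 x hx y' hy', hw.2 y hy x' hx']
  ring

theorem bilin_conj_left (hw : IsRealSlice B w) (hc : ∀ x ∈ w, c x = x) (a b : L) :
    B (c a) b = starRingEnd ℂ (B a (c b)) := by
  rw [← hw.bilin_conj_conj hc, hw.1.conj_conj hc]

end IsRealSlice

end Conjugation

section CompactRealForm

variable {B : LinearMap.BilinForm ℂ L} {u : LieSubalgebra ℝ L} {c : L →ₗ⋆[ℂ] L}

theorem IsCompactRealForm.re_bilin_conj_self_pos (hBsymm : ∀ x y : L, B x y = B y x)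
    (hu : IsCompactRealForm B u) (hc : ∀ x ∈ u, c x = x) {z : L} (hz : z ≠ 0) :
    0 < (B (c z) z).re := by
  obtain ⟨x, hx, y, hy, rfl⟩ := hu.1.1.2 z
  have hnonneg : ∀ t ∈ u, 0 ≤ (B t t).re := fun t ht => by
    rcases eq_or_ne t 0 with rfl | h
    · simp
    · exact (hu.2 t ht h).le
  have hval : B (c (x + Complex.I • y)) (x + Complex.I • y) = B x x + B y y := by
    rw [conj_add_I_smul hc hx hy, B.apply_add_I_smul_add_I_smul]
    simp only [map_neg, LinearMap.neg_apply, hBsymm y x]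
    ring
  rw [hval, Complex.add_re]
  by_cases hx0 : x = 0
  · subst hx0
    have hy0 : y ≠ 0 := by rintro rfl; simp at hz
    simpa using hu.2 y hy hy0
  · exact add_pos_of_pos_of_nonneg (hu.2 x hx hx0) (hnonneg y hy)

abbrev IsCompactRealForm.innerProductCore (hBsymm : ∀ x y : L, B x y = B y x)
    (hu : IsCompactRealForm B u) (hc : ∀ x ∈ u, c x = x) : InnerProductSpace.Core ℂ L where
  inner x y := B (c x) y
  conj_inner_symm x y := by
    rw [← hu.1.bilin_conj_conj hc, hu.1.1.conj_conj hc, hBsymm]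
  re_inner_nonneg x := by
    rcases eq_or_ne x 0 with rfl | hx
    · simp
    · exact (hu.re_bilin_conj_self_pos hBsymm hc hx).le
  add_left x y z := by simp only [map_add, LinearMap.add_apply]
  smul_left x y r := by
    simp only [map_smulₛₗ, LinearMap.smul_apply, smul_eq_mul, RingHom.id_apply]
  definite x hx := by
    by_contra h
    have := hu.re_bilin_conj_self_pos hBsymm hc h
    simp_all

theorem IsCompactRealForm.exists_diagRpow_one_eq_conj_conj_sq [FiniteDimensional ℂ L]
    (hBsymm : ∀ x y : L, B x y = B y x) (hu : IsCompactRealForm B u) (hc : ∀ x ∈ u, c x = x)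
    {g : LieSubalgebra ℝ L} (hg : IsRealSlice B g) {d : L →ₗ⋆[ℂ] L} (hd : ∀ x ∈ g, d x = x) :
    ∃ (b : Basis (Fin (finrank ℂ L)) ℂ L) (μ : Fin (finrank ℂ L) → ℝ),
      (∀ i, 0 < μ i) ∧ ∀ v, b.diagRpow μ 1 v = d (c (d (c v))) := by
  let core := hu.innerProductCore hBsymm hc
  let : NormedAddCommGroup L := core.toNormedAddCommGroup
  let : InnerProductSpace ℂ L := .ofCore core.toCore
  have hsymm : (d.comp c : L →ₗ[ℂ] L).IsSymmetric := fun x y => by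
    change B (c (d (c x))) y = B (c x) (d (c y))
    rw [hu.1.bilin_conj_left hc, hg.bilin_conj_left hd, Complex.conj_conj]
  have hinj : Function.Injective (d.comp c : L →ₗ[ℂ] L) := fun x y h => by
    simpa [hu.1.1.conj_conj hc, hg.1.conj_conj hd] using congrArg (fun v => c (d v)) h
  obtain ⟨b, μ, hμ, hb⟩ := hsymm.exists_basis_sq_apply_eq_pos_smul hinj
  refine ⟨b, μ, hμ, fun v => LinearMap.congr_fun (b.ext (f₁ := b.diagRpow μ 1)
    (f₂ := d.comp c ∘ₗ d.comp c) fun i => ?_) v⟩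
  simpa [Basis.diagRpow_apply_self] using (hb i).symm

end CompactRealForm

theorem exists_automorphism_conjugation_invariant_general [FiniteDimensional ℂ L]
    (B : LinearMap.BilinForm ℂ L) (hBsymm : ∀ x y : L, B x y = B y x)
    (g : LieSubalgebra ℝ L) (hg : IsRealSlice B g)
    (σ : L →ₗ[ℝ] L) (hσfix : ∀ x ∈ g, σ x = x)
    (hσI : ∀ v : L, σ (Complex.I • v) = -(Complex.I • σ v))
    (u : LieSubalgebra ℝ L) (hu : IsCompactRealForm B u) :
    ∃ φ : L ≃ₗ⁅ℂ⁆ L, (∀ x y : L, B (φ x) (φ y) = B x y) ∧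
      ∀ z ∈ (u : Set L), σ (φ z) ∈ ⇑φ '' (u : Set L) := by
  let σ' : L →ₗ⋆[ℂ] L := σ.toConjLinear hσI
  have hσ' : ∀ x ∈ g, σ' x = x := hσfix
  obtain ⟨τ, hτ⟩ := hu.1.1.exists_conj
  obtain ⟨b, μ, hμ, hρ⟩ := hu.exists_diagRpow_one_eq_conj_conj_sq hBsymm hτ hg hσ'
  have hσσ := hg.1.conj_conj hσ'
  have hττ := hu.1.1.conj_conj hτ
  have hlie (x y : L) : b.diagRpow μ 1 ⁅x, y⁆ = ⁅b.diagRpow μ 1 x, b.diagRpow μ 1 y⁆ := by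
    simp only [hρ, hg.1.conj_lie hσ', hu.1.1.conj_lie hτ]
  have hB (x y : L) : B (b.diagRpow μ 1 x) (b.diagRpow μ 1 y) = B x y := by
    simp only [hρ, hg.bilin_conj_conj hσ', hu.1.bilin_conj_conj hτ, Complex.conj_conj]
  have hσcomm := b.apply_diagRpow_eq_diagRpow_neg_apply hμ σ' fun v => by simp only [hρ, hσσ, hττ]
  have hτcomm := b.apply_diagRpow_eq_diagRpow_neg_apply hμ τ fun v => by simp only [hρ, hσσ, hττ]
  refine ⟨b.diagRpowLieEquiv hμ hlie (1 / 4), b.diagRpow_bilin hμ B hB _,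
    fun z hz => ⟨b.diagRpow μ (-1 / 2) (σ z), hu.1.1.mem_of_conj_eq hτ ?_, ?_⟩⟩
  · calc τ (b.diagRpow μ (-1 / 2) (σ' z))
        = b.diagRpow μ (1 / 2) (τ (σ' (τ z))) := by rw [hτcomm, hτ z hz]; norm_num
      _ = b.diagRpow μ (-1 / 2) (b.diagRpow μ 1 (τ (σ' (τ z)))) := by
        rw [← LinearMap.comp_apply (b.diagRpow μ (-1 / 2)), ← b.diagRpow_add hμ]; norm_num
      _ = b.diagRpow μ (-1 / 2) (σ' z) := by rw [hρ, hττ, hσσ, hττ]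
  · change b.diagRpow μ (1 / 4) (b.diagRpow μ (-1 / 2) (σ' z)) = σ' (b.diagRpow μ (1 / 4) z)
    rw [← LinearMap.comp_apply, ← b.diagRpow_add hμ, hσcomm]
    norm_num

/-- Let `g` be a real slice of `(L, B)` with conjugation `σ`
(the `ℝ`-linear involution of `L` fixing `g` pointwise and anti-commuting with `i`), and
let `u` be a compact real form of `(L, B)`.  Then there is a `ℂ`-linear Lie algebra
automorphism `φ` of `L` preserving `B` such that `σ (φ u) ⊆ φ u`. -/
theorem exists_automorphism_conjugation_invariant [FiniteDimensional ℂ L]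
    (B : LinearMap.BilinForm ℂ L) (hBsymm : ∀ x y : L, B x y = B y x)
    (hBnd : B.Nondegenerate) (g : LieSubalgebra ℝ L) (hg : IsRealSlice B g)
    (σ : L →ₗ[ℝ] L) (hσfix : ∀ x ∈ g, σ x = x)
    (hσI : ∀ v : L, σ (Complex.I • v) = -(Complex.I • σ v))
    (u : LieSubalgebra ℝ L) (hu : IsCompactRealForm B u) :
    ∃ φ : L ≃ₗ⁅ℂ⁆ L, (∀ x y : L, B (φ x) (φ y) = B x y) ∧
      ∀ z ∈ (u : Set L), σ (φ z) ∈ ⇑φ '' (u : Set L) :=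
  exists_automorphism_conjugation_invariant_general B hBsymm g hg σ hσfix hσI u hu
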